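/- arXiv:2505.03504 — 2 statements merged into one kernel-verified Lean document; each statement's English description precedes it below -/
import Mathlib

section
/- Let T_S be a positive random variable with E[T_S] = 1 and finite variance σ_S². For n ≥ 1 define ζ⁽ⁿ⁾(θ) as the unique real solution of e^{−θ}·E[exp(−ζ⁽ⁿ⁾(θ)·min(T_S, n^{1/2}))] = 1. Then as n → ∞, for fixed θ, ζ⁽ⁿ⁾(n^{−1/2}θ) = −n^{−1/2}θ + (1/2)σ_S² n^{−1}θ² + o(n^{−1}θ²). -/
/-!
Put `s = √n`, `X = min T s` and `z = ζ n (θ / s)`. Expanding the exponential to second order,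
the defining equation reads `exp (θ / s) = 1 - z E[X] + z² E[X²] / 2 + E[R (-z X)]` with
`|R x| ≤ |x|³ exp |x|`. Because `E[T²] < ∞`, truncating at `s` is cheap: `s (1 - E[X]) → 0` and
`E[X²] → E[T²]`. Comparing `E[exp (-z X)]` with `1 - z E[X]` from below, and with the quadratic
`1 - z E[X] + z² E[X²] / 2` from above when `z ≥ 0`, gives the a priori bound `|s z| ≤ 4 |θ|`.
Dominated convergence then yields `s² E[R (-z X)] → 0`, and matching the terms of order `1 / s`
and `1 / s²` gives `s z → -θ` and `s² z + s θ → Var[T] θ² / 2`.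
-/

open MeasureTheory Filter Topology Real ProbabilityTheory

noncomputable def expRemainder (x : ℝ) : ℝ := exp x - (1 + x + x ^ 2 / 2)

lemma continuous_expRemainder : Continuous expRemainder := by
  unfold expRemainder; fun_prop

lemma exp_neg_le_one_sub_add_sq_div_two {x : ℝ} (hx : 0 ≤ x) :
    exp (-x) ≤ 1 - x + x ^ 2 / 2 := by
  have h := sum_le_exp_of_nonneg hx 4
  simp only [Finset.sum_range_succ, Finset.sum_range_zero, Nat.factorial] at h
  norm_num at h
  rw [exp_neg, inv_le_iff_one_le_mul₀ (exp_pos x)]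
  nlinarith [pow_nonneg hx 3, pow_nonneg hx 4, pow_nonneg hx 5]

lemma abs_expRemainder_le (x : ℝ) : |expRemainder x| ≤ |x| ^ 3 * exp |x| := by
  have h := Complex.norm_exp_sub_sum_le_norm_mul_exp x 3
  simp only [Finset.sum_range_succ, Finset.sum_range_zero, Nat.factorial] at h
  norm_num at h
  rw [expRemainder, ← Real.norm_eq_abs, ← Complex.norm_real]
  exact_mod_cast h

lemma abs_sq_mul_expRemainder_le {s z x y K : ℝ} (hx : 0 ≤ x) (hxy : x ≤ y)
    (hsz : |s * z| ≤ K) :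
    |s ^ 2 * expRemainder (-z * x)| ≤ K ^ 2 * y ^ 2 * (|z| * x * exp (|z| * x)) := by
  have habs : |-z * x| = |z| * x := by rw [abs_mul, abs_neg, abs_of_nonneg hx]
  have hK : |s * z| * x ≤ K * y := mul_le_mul hsz hxy hx ((abs_nonneg _).trans hsz)
  calc |s ^ 2 * expRemainder (-z * x)| ≤ s ^ 2 * ((|z| * x) ^ 3 * exp (|z| * x)) := by
        rw [abs_mul, abs_of_nonneg (sq_nonneg s), ← habs]
        gcongr
        exact abs_expRemainder_le _
    _ = (|s * z| * x) ^ 2 * (|z| * x * exp (|z| * x)) := by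
        rw [abs_mul, ← sq_abs s]; ring
    _ ≤ K ^ 2 * y ^ 2 * (|z| * x * exp (|z| * x)) := by
        rw [← mul_pow]
        gcongr

lemma tendsto_sq_mul_expRemainder_div (θ : ℝ) :
    Tendsto (fun x : ℝ => x ^ 2 * expRemainder (θ / x)) atTop (𝓝 0) := by
  have hinv : Tendsto (fun x : ℝ => x⁻¹) atTop (𝓝 0) := tendsto_inv_atTop_zero
  have hbound : Tendsto (fun x : ℝ => |θ| ^ 3 * exp (|θ| * x⁻¹) * x⁻¹) atTop (𝓝 0) := by
    have hexp := (continuous_exp.tendsto 0).comp (by simpa using hinv.const_mul |θ|)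
    simpa using (hexp.const_mul (|θ| ^ 3)).mul hinv
  refine squeeze_zero_norm' ?_ hbound
  filter_upwards [eventually_gt_atTop 0] with x hx
  have habs : |θ / x| = |θ| * x⁻¹ := by rw [abs_div, abs_of_pos hx, div_eq_mul_inv]
  calc ‖x ^ 2 * expRemainder (θ / x)‖ ≤ x ^ 2 * (|θ / x| ^ 3 * exp |θ / x|) := by
        rw [norm_mul, Real.norm_eq_abs, abs_of_nonneg (sq_nonneg x)]
        gcongr
        exact abs_expRemainder_le _
    _ = |θ| ^ 3 * exp (|θ| * x⁻¹) * x⁻¹ := by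
        rw [habs]; field_simp

section Sequences

variable {ι : Type*} {l : Filter ι}

lemma tendsto_zero_of_eventually_abs_mul_le {s u : ι → ℝ} {K : ℝ} (hs : Tendsto s l atTop)
    (h : ∀ᶠ i in l, |s i * u i| ≤ K) : Tendsto u l (𝓝 0) := by
  refine squeeze_zero_norm' ?_ ((tendsto_const_nhds (x := K)).div_atTop hs)
  filter_upwards [h, hs.eventually_gt_atTop 0] with i hi hsi
  rw [Real.norm_eq_abs, le_div_iff₀ hsi]
  rwa [abs_mul, abs_of_pos hsi, mul_comm] at hi

lemma tendsto_of_tendsto_mul_sub {s u : ι → ℝ} {a : ℝ} (hs : Tendsto s l atTop)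
    (h : Tendsto (fun i => s i * (a - u i)) l (𝓝 0)) : Tendsto u l (𝓝 a) := by
  have hbdd : ∀ᶠ i in l, |s i * (a - u i)| ≤ 1 := by
    have habs : Tendsto (fun i => |s i * (a - u i)|) l (𝓝 0) := by simpa using h.abs
    exact habs.eventually (eventually_le_nhds one_pos)
  simpa using (tendsto_const_nhds (x := a)).sub (tendsto_zero_of_eventually_abs_mul_le hs hbdd)

lemma tendsto_mul_of_tendsto_sq_mul {s u : ι → ℝ} (hs : Tendsto s l atTop)
    (h : Tendsto (fun i => s i ^ 2 * u i) l (𝓝 0)) : Tendsto (fun i => s i * u i) l (𝓝 0) := by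
  have hlim : Tendsto (fun i => s i ^ 2 * u i * (s i)⁻¹) l (𝓝 0) := by
    simpa using h.mul (tendsto_inv_atTop_zero.comp hs)
  refine hlim.congr' ?_
  filter_upwards [hs.eventually_gt_atTop 0] with i hi
  field_simp

lemma tendsto_mul_of_exp_div_eq {s z A B E : ι → ℝ} {θ β K : ℝ}
    (hs : Tendsto s l atTop) (hA : Tendsto (fun i => s i * (1 - A i)) l (𝓝 0))
    (hB : Tendsto B l (𝓝 β)) (hE : Tendsto (fun i => s i ^ 2 * E i) l (𝓝 0))
    (hsz : ∀ᶠ i in l, |s i * z i| ≤ K)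
    (heq : ∀ᶠ i in l, exp (θ / s i) = 1 - z i * A i + z i ^ 2 * B i / 2 + E i) :
    Tendsto (fun i => s i * z i) l (𝓝 (-θ)) := by
  have hA1 : Tendsto A l (𝓝 1) := tendsto_of_tendsto_mul_sub hs hA
  have hz : Tendsto z l (𝓝 0) := tendsto_zero_of_eventually_abs_mul_le hs hsz
  have hszB : Tendsto (fun i => s i * z i * (z i * B i)) l (𝓝 0) := by
    have hbdd : IsBoundedUnder (· ≤ ·) l (norm ∘ fun i => s i * z i) :=
      isBoundedUnder_of_eventually_le (a := K) hsz
    exact isBoundedUnder_le_mul_tendsto_zero hbdd (by simpa using hz.mul hB)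
  have hθs : Tendsto (fun i => θ ^ 2 / (2 * s i)) l (𝓝 0) :=
    tendsto_const_nhds.div_atTop (hs.const_mul_atTop two_pos)
  have hρ := tendsto_mul_of_tendsto_sq_mul hs ((tendsto_sq_mul_expRemainder_div θ).comp hs)
  have hszA : Tendsto (fun i => s i * z i * A i) l (𝓝 (-θ)) := by
    have hlim : Tendsto (fun i => -θ - θ ^ 2 / (2 * s i) - s i * expRemainder (θ / s i)
        + s i * z i * (z i * B i) / 2 + s i * E i) l (𝓝 (-θ)) := by
      simpa using ((((tendsto_const_nhds (x := -θ)).sub hθs).sub hρ).add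
        (hszB.div_const 2)).add (tendsto_mul_of_tendsto_sq_mul hs hE)
    refine hlim.congr' ?_
    filter_upwards [heq, hs.eventually_gt_atTop 0] with i h hi
    rw [expRemainder, h]
    field_simp
    ring
  have hlim : Tendsto (fun i => s i * z i * A i * (A i)⁻¹) l (𝓝 (-θ)) := by
    simpa using hszA.mul (hA1.inv₀ one_ne_zero)
  refine hlim.congr' ?_
  filter_upwards [hA1.eventually_ne one_ne_zero] with i hi
  field_simp

lemma tendsto_sq_mul_add_mul_of_exp_div_eq {s z A B E : ι → ℝ} {θ β K : ℝ}
    (hs : Tendsto s l atTop) (hA : Tendsto (fun i => s i * (1 - A i)) l (𝓝 0))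
    (hB : Tendsto B l (𝓝 β)) (hE : Tendsto (fun i => s i ^ 2 * E i) l (𝓝 0))
    (hsz : ∀ᶠ i in l, |s i * z i| ≤ K)
    (heq : ∀ᶠ i in l, exp (θ / s i) = 1 - z i * A i + z i ^ 2 * B i / 2 + E i) :
    Tendsto (fun i => s i ^ 2 * z i + s i * θ) l (𝓝 ((β - 1) * θ ^ 2 / 2)) := by
  have hsz' := tendsto_mul_of_exp_div_eq hs hA hB hE hsz heq
  have hρ : Tendsto (fun i => s i ^ 2 * expRemainder (θ / s i)) l (𝓝 0) :=
    (tendsto_sq_mul_expRemainder_div θ).comp hs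
  have hszA : Tendsto (fun i => s i ^ 2 * z i * A i + s i * θ) l
      (𝓝 ((β - 1) * θ ^ 2 / 2)) := by
    have hlim : Tendsto (fun i => -θ ^ 2 / 2 - s i ^ 2 * expRemainder (θ / s i)
        + (s i * z i) ^ 2 * B i / 2 + s i ^ 2 * E i) l (𝓝 ((β - 1) * θ ^ 2 / 2)) := by
      convert (((tendsto_const_nhds (x := -θ ^ 2 / 2)).sub hρ).add
        (((hsz'.pow 2).mul hB).div_const 2)).add hE using 2
      ring
    refine hlim.congr' ?_
    filter_upwards [heq, hs.eventually_gt_atTop 0] with i h hi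
    rw [expRemainder, h]
    field_simp
    ring
  have hlim : Tendsto (fun i => (s i ^ 2 * z i * A i + s i * θ) + s i * z i * (s i * (1 - A i)))
      l (𝓝 ((β - 1) * θ ^ 2 / 2)) := by
    simpa using hszA.add (hsz'.mul hA)
  exact hlim.congr' (Eventually.of_forall fun i => by ring)

end Sequences

section Probability

variable {Ω : Type*} [MeasurableSpace Ω] {μ : Measure Ω}

section Laplace

variable [IsProbabilityMeasure μ] {X : Ω → ℝ} {c : ℝ}

lemma integral_one_sub_mul_add_sq (hX : Integrable X μ) (hX2 : Integrable (fun ω => X ω ^ 2) μ) :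
    ∫ ω, (1 - c * X ω + c ^ 2 * X ω ^ 2 / 2) ∂μ
      = 1 - c * ∫ ω, X ω ∂μ + c ^ 2 * (∫ ω, X ω ^ 2 ∂μ) / 2 := by
  have hlin : Integrable (fun ω => 1 - c * X ω) μ := (integrable_const 1).sub (hX.const_mul c)
  rw [integral_add hlin ((hX2.const_mul _).div_const 2),
    integral_sub (integrable_const 1) (hX.const_mul c), integral_div, integral_const_mul,
    integral_const_mul]
  simp

lemma integral_exp_neg_mul_eq (hX : Integrable X μ) (hX2 : Integrable (fun ω => X ω ^ 2) μ)
    (hexp : Integrable (fun ω => exp (-c * X ω)) μ) :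
    ∫ ω, exp (-c * X ω) ∂μ = 1 - c * ∫ ω, X ω ∂μ + c ^ 2 * (∫ ω, X ω ^ 2 ∂μ) / 2
      + ∫ ω, expRemainder (-c * X ω) ∂μ := by
  have hpoly : Integrable (fun ω => 1 - c * X ω + c ^ 2 * X ω ^ 2 / 2) μ :=
    ((integrable_const 1).sub (hX.const_mul c)).add ((hX2.const_mul _).div_const 2)
  have hrem : (fun ω => expRemainder (-c * X ω))
      = fun ω => exp (-c * X ω) - (1 - c * X ω + c ^ 2 * X ω ^ 2 / 2) := by
    ext ω; rw [expRemainder]; ring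
  rw [hrem, integral_sub hexp hpoly, integral_one_sub_mul_add_sq hX hX2]
  ring

lemma one_sub_mul_integral_le_integral_exp_neg_mul (hX : Integrable X μ)
    (hexp : Integrable (fun ω => exp (-c * X ω)) μ) :
    1 - c * ∫ ω, X ω ∂μ ≤ ∫ ω, exp (-c * X ω) ∂μ := by
  calc 1 - c * ∫ ω, X ω ∂μ = ∫ ω, (1 - c * X ω) ∂μ := by
        rw [integral_sub (integrable_const 1) (hX.const_mul c), integral_const_mul]; simp
    _ ≤ ∫ ω, exp (-c * X ω) ∂μ :=
        integral_mono ((integrable_const 1).sub (hX.const_mul c)) hexp fun ω => by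
          linarith [add_one_le_exp (-c * X ω)]

lemma integral_exp_neg_mul_le (hX0 : ∀ ω, 0 ≤ X ω) (hX : Integrable X μ)
    (hX2 : Integrable (fun ω => X ω ^ 2) μ) (hc : 0 ≤ c) :
    ∫ ω, exp (-c * X ω) ∂μ ≤ 1 - c * ∫ ω, X ω ∂μ + c ^ 2 * (∫ ω, X ω ^ 2 ∂μ) / 2 := by
  rw [← integral_one_sub_mul_add_sq hX hX2]
  refine integral_mono_of_nonneg (ae_of_all _ fun ω => (exp_pos _).le)
    (((integrable_const 1).sub (hX.const_mul c)).add ((hX2.const_mul _).div_const 2))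
    (ae_of_all _ fun ω => ?_)
  have h := exp_neg_le_one_sub_add_sq_div_two (mul_nonneg hc (hX0 ω))
  rw [← neg_mul] at h
  linarith

lemma integral_exp_neg_mul_le_one_sub_half (hX0 : ∀ ω, 0 ≤ X ω) (hX : Integrable X μ)
    (hX2 : Integrable (fun ω => X ω ^ 2) μ) (hc : 0 ≤ c)
    (hcb : c * ∫ ω, X ω ^ 2 ∂μ ≤ ∫ ω, X ω ∂μ) :
    ∫ ω, exp (-c * X ω) ∂μ ≤ 1 - c * (∫ ω, X ω ∂μ) / 2 := by
  have h := integral_exp_neg_mul_le hX0 hX hX2 hc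
  nlinarith

lemma abs_mul_integral_le_of_integral_exp_neg_mul_eq (hX0 : ∀ ω, 0 ≤ X ω)
    (hX : Integrable X μ) (hX2 : Integrable (fun ω => X ω ^ 2) μ)
    (hexp : ∀ c, Integrable (fun ω => exp (-c * X ω)) μ) {z t : ℝ} (ha : 0 < ∫ ω, X ω ∂μ)
    (ht : |t| ≤ 1) (htb : 2 * |t| * ∫ ω, X ω ^ 2 ∂μ < (∫ ω, X ω ∂μ) ^ 2)
    (heq : ∫ ω, exp (-z * X ω) ∂μ = exp t) :
    |z| * ∫ ω, X ω ∂μ ≤ 2 * |t| := by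
  set a := ∫ ω, X ω ∂μ
  set b := ∫ ω, X ω ^ 2 ∂μ
  rcases lt_or_ge z 0 with hz | hz
  · have h := one_sub_mul_integral_le_integral_exp_neg_mul hX (hexp z)
    have ht2 := abs_exp_sub_one_le ht
    rw [heq] at h
    rw [abs_of_neg hz]
    linarith [le_abs_self (exp t - 1)]
  have hexpt : 1 - exp t ≤ |t| := by linarith [add_one_le_exp t, neg_abs_le t]
  rcases le_or_gt (z * b) a with hzb | hzb
  · have h := integral_exp_neg_mul_le_one_sub_half hX0 hX hX2 hz hzb
    rw [heq] at h
    rw [abs_of_nonneg hz]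
    linarith
  -- Past the minimum `a / b` of the quadratic bound, use that `c ↦ ∫ exp (-c X)` is antitone.
  exfalso
  have hb : 0 < b := by
    by_contra! hb
    nlinarith [mul_nonpos_of_nonneg_of_nonpos hz hb]
  have hcz : a / b ≤ z := (div_le_iff₀ hb).2 hzb.le
  have hmono : ∫ ω, exp (-z * X ω) ∂μ ≤ ∫ ω, exp (-(a / b) * X ω) ∂μ :=
    integral_mono (hexp z) (hexp (a / b)) fun ω =>
      exp_le_exp.2 (by nlinarith [hX0 ω])
  have h := integral_exp_neg_mul_le_one_sub_half hX0 hX hX2 (div_nonneg ha.le hb.le)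
    (by rw [div_mul_cancel₀ a hb.ne'])
  rw [heq] at hmono
  have hab : a / b * a / 2 ≤ |t| := by linarith
  rw [div_mul_eq_mul_div, div_div, div_le_iff₀ (by positivity)] at hab
  nlinarith

lemma eventually_abs_mul_le_of_integral_exp_neg_mul_eq {ι : Type*} {l : Filter ι}
    {X : ι → Ω → ℝ} {s z : ι → ℝ} {θ β : ℝ} (hX0 : ∀ i ω, 0 ≤ X i ω)
    (hX : ∀ i, Integrable (X i) μ) (hX2 : ∀ i, Integrable (fun ω => X i ω ^ 2) μ)
    (hexp : ∀ i c, Integrable (fun ω => exp (-c * X i ω)) μ) (hs : Tendsto s l atTop)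
    (hA : Tendsto (fun i => ∫ ω, X i ω ∂μ) l (𝓝 1))
    (hB : Tendsto (fun i => ∫ ω, X i ω ^ 2 ∂μ) l (𝓝 β))
    (heq : ∀ᶠ i in l, ∫ ω, exp (-z i * X i ω) ∂μ = exp (θ / s i)) :
    ∀ᶠ i in l, |s i * z i| ≤ 4 * |θ| := by
  have ht : Tendsto (fun i => |θ / s i|) l (𝓝 0) := by
    simpa using (tendsto_const_nhds.div_atTop hs).abs
  have htb : Tendsto (fun i => 2 * |θ / s i| * ∫ ω, X i ω ^ 2 ∂μ) l (𝓝 0) := by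
    simpa using (ht.const_mul 2).mul hB
  filter_upwards [heq, hA.eventually (eventually_ge_nhds (by norm_num : (1 / 2 : ℝ) < 1)),
    ht.eventually (eventually_le_nhds one_pos), htb.eventually (eventually_lt_nhds
    (by norm_num : (0 : ℝ) < 1 / 4)), hs.eventually_gt_atTop 0] with i h hA2 ht1 htb hsi
  have hbound := abs_mul_integral_le_of_integral_exp_neg_mul_eq (hX0 i) (hX i) (hX2 i) (hexp i)
    (by linarith) ht1 (by nlinarith) h
  rw [abs_div, abs_of_pos hsi, ← mul_div_assoc, le_div_iff₀ hsi] at hbound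
  rw [abs_mul, abs_of_pos hsi]
  nlinarith [mul_nonneg (mul_nonneg hsi.le (abs_nonneg (z i))) (sub_nonneg.2 hA2)]

end Laplace

lemma tendsto_sq_mul_integral_expRemainder {X : ℕ → Ω → ℝ} {T : Ω → ℝ} {s z : ℕ → ℝ} {K : ℝ}
    (hXm : ∀ n, AEStronglyMeasurable (X n) μ) (hX0 : ∀ n ω, 0 ≤ X n ω)
    (hXT : ∀ n ω, X n ω ≤ T ω) (hXs : ∀ n ω, X n ω ≤ s n)
    (hT2 : Integrable (fun ω => T ω ^ 2) μ) (hs : Tendsto s atTop atTop)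
    (hsz : ∀ᶠ n in atTop, |s n * z n| ≤ K) :
    Tendsto (fun n => s n ^ 2 * ∫ ω, expRemainder (-z n * X n ω) ∂μ) atTop (𝓝 0) := by
  have hz := tendsto_zero_of_eventually_abs_mul_le hs hsz
  simp_rw [← integral_const_mul]
  rw [← integral_zero Ω ℝ]
  refine tendsto_integral_filter_of_dominated_convergence
    (fun ω => K ^ 2 * T ω ^ 2 * (K * exp K)) ?_ ?_ ?_ ?_
  · exact Eventually.of_forall fun n => (continuous_expRemainder.comp_aestronglyMeasurable
      ((hXm n).const_mul _)).const_mul _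
  · filter_upwards [hsz, hs.eventually_ge_atTop 0] with n hn hs0
    refine ae_of_all _ fun ω => (abs_sq_mul_expRemainder_le (hX0 n ω) (hXT n ω) hn).trans ?_
    have hzX : |z n| * X n ω ≤ K := calc
      |z n| * X n ω ≤ |z n| * s n := by gcongr; exact hXs n ω
      _ = |s n * z n| := by rw [abs_mul, abs_of_nonneg hs0, mul_comm]
      _ ≤ K := hn
    have hK : 0 ≤ K := (abs_nonneg _).trans hn
    gcongr
  · exact (hT2.const_mul (K ^ 2)).mul_const (K * exp K)
  · refine ae_of_all _ fun ω => squeeze_zero_norm' ?_ (a := fun n =>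
      K ^ 2 * T ω ^ 2 * (|z n| * T ω * exp (|z n| * T ω))) ?_
    · filter_upwards [hsz] with n hn
      have hT0 : 0 ≤ T ω := (hX0 n ω).trans (hXT n ω)
      refine (abs_sq_mul_expRemainder_le (hX0 n ω) (hXT n ω) hn).trans ?_
      gcongr <;> exact hXT n ω
    · have hzT : Tendsto (fun n => |z n| * T ω) atTop (𝓝 0) := by
        simpa using hz.abs.mul_const (T ω)
      simpa using (hzT.mul ((continuous_exp.tendsto 0).comp hzT)).const_mul (K ^ 2 * T ω ^ 2)

section Truncation

variable {T : Ω → ℝ} {s : ℕ → ℝ}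

lemma memLp_min {p : ENNReal} (hT : Measurable T) (hT0 : ∀ ω, 0 ≤ T ω) (hTp : MemLp T p μ)
    {b : ℝ} (hb : 0 ≤ b) : MemLp (fun ω => min (T ω) b) p μ :=
  hTp.mono (hT.min measurable_const).aestronglyMeasurable (ae_of_all _ fun ω => by
    simp only [Real.norm_eq_abs, abs_of_nonneg (hT0 ω), abs_of_nonneg (le_min (hT0 ω) hb)]
    exact min_le_left _ _)

lemma tendsto_integral_mul_sub_min (hT : Measurable T)
    (hT2 : Integrable (fun ω => T ω ^ 2) μ) (hs0 : ∀ n, 0 ≤ s n) (hs : Tendsto s atTop atTop) :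
    Tendsto (fun n => ∫ ω, s n * (T ω - min (T ω) (s n)) ∂μ) atTop (𝓝 0) := by
  rw [← integral_zero Ω ℝ]
  refine tendsto_integral_filter_of_dominated_convergence (fun ω => T ω ^ 2)
    (Eventually.of_forall fun n =>
      ((hT.sub (hT.min measurable_const)).const_mul _).aestronglyMeasurable)
    (Eventually.of_forall fun n => ae_of_all _ fun ω => ?_) hT2
    (ae_of_all _ fun ω => tendsto_const_nhds.congr' ?_)
  · rcases le_total (T ω) (s n) with h | h
    · simp [min_eq_left h, sq_nonneg]
    · rw [min_eq_right h, Real.norm_eq_abs, abs_of_nonneg (mul_nonneg (hs0 n) (by linarith))]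
      nlinarith [hs0 n]
  · filter_upwards [hs.eventually_ge_atTop (T ω)] with n hn
    simp [min_eq_left hn]

lemma tendsto_integral_min_sq (hT : Measurable T) (hT0 : ∀ ω, 0 ≤ T ω)
    (hT2 : Integrable (fun ω => T ω ^ 2) μ) (hs0 : ∀ n, 0 ≤ s n) (hs : Tendsto s atTop atTop) :
    Tendsto (fun n => ∫ ω, min (T ω) (s n) ^ 2 ∂μ) atTop (𝓝 (∫ ω, T ω ^ 2 ∂μ)) := by
  refine tendsto_integral_filter_of_dominated_convergence (fun ω => T ω ^ 2)
    (Eventually.of_forall fun n => ((hT.min measurable_const).pow_const 2).aestronglyMeasurable)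
    (Eventually.of_forall fun n => ae_of_all _ fun ω => ?_) hT2
    (ae_of_all _ fun ω => tendsto_const_nhds.congr' ?_)
  · rw [Real.norm_eq_abs, abs_of_nonneg (sq_nonneg _)]
    exact pow_le_pow_left₀ (le_min (hT0 ω) (hs0 n)) (min_le_left _ _) 2
  · filter_upwards [hs.eventually_ge_atTop (T ω)] with n hn
    simp [min_eq_left hn]

end Truncation

theorem tendsto_sq_mul_add_of_integral_exp_neg_mul_min_eq [IsProbabilityMeasure μ] {T : Ω → ℝ}
    (hT : Measurable T) (hT0 : ∀ ω, 0 ≤ T ω) (hTL2 : MemLp T 2 μ) (hmean : ∫ ω, T ω ∂μ = 1)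
    {s z : ℕ → ℝ} {θ : ℝ} (hs0 : ∀ n, 0 ≤ s n) (hs : Tendsto s atTop atTop)
    (heq : ∀ᶠ n in atTop, ∫ ω, exp (-z n * min (T ω) (s n)) ∂μ = exp (θ / s n)) :
    Tendsto (fun n => s n ^ 2 * z n + s n * θ) atTop (𝓝 (variance T μ * θ ^ 2 / 2)) := by
  set X : ℕ → Ω → ℝ := fun n ω => min (T ω) (s n)
  have hXL2 : ∀ n, MemLp (X n) 2 μ := fun n => memLp_min hT hT0 hTL2 (hs0 n)
  have hXi : ∀ n, Integrable (X n) μ := fun n => (hXL2 n).integrable one_le_two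
  have hX0 : ∀ n ω, 0 ≤ X n ω := fun n ω => le_min (hT0 ω) (hs0 n)
  have hexp : ∀ n c, Integrable (fun ω => exp (-c * X n ω)) μ := fun n c =>
    integrable_exp_mul_of_mem_Icc (a := 0) (b := s n) (hT.min measurable_const).aemeasurable
      (ae_of_all _ fun ω => ⟨hX0 n ω, min_le_right _ _⟩)
  have hA : Tendsto (fun n => s n * (1 - ∫ ω, X n ω ∂μ)) atTop (𝓝 0) := by
    refine (tendsto_integral_mul_sub_min hT hTL2.integrable_sq hs0 hs).congr fun n => ?_
    rw [integral_const_mul, integral_sub (hTL2.integrable one_le_two) (hXi n), hmean]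
  have hB : Tendsto (fun n => ∫ ω, X n ω ^ 2 ∂μ) atTop (𝓝 (∫ ω, T ω ^ 2 ∂μ)) :=
    tendsto_integral_min_sq hT hT0 hTL2.integrable_sq hs0 hs
  have hsz := eventually_abs_mul_le_of_integral_exp_neg_mul_eq hX0 hXi
    (fun n => (hXL2 n).integrable_sq) hexp hs (tendsto_of_tendsto_mul_sub hs hA) hB heq
  have hE := tendsto_sq_mul_integral_expRemainder
    (fun n => (hT.min measurable_const).aestronglyMeasurable) hX0 (fun n ω => min_le_left _ _)
    (fun n ω => min_le_right _ _) hTL2.integrable_sq hs hsz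
  have hvar : variance T μ = ∫ ω, T ω ^ 2 ∂μ - 1 := by
    simpa [hmean] using variance_eq_sub hTL2
  rw [hvar]
  exact tendsto_sq_mul_add_mul_of_exp_div_eq hs hA hB hE hsz <| heq.mono fun n h => by
    rw [← h, integral_exp_neg_mul_eq (hXi n) (hXL2 n).integrable_sq (hexp n (z n))]

end Probability

theorem stmt7 {Ω : Type*} [MeasurableSpace Ω] (μ : Measure Ω) [IsProbabilityMeasure μ]
    (T : Ω → ℝ) (hTmeas : Measurable T) (hTpos : ∀ ω, 0 < T ω)
    (hTmean : ∫ ω, T ω ∂μ = 1)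
    (σS : ℝ) (hσS : σS ^ 2 = ∫ ω, (T ω - 1) ^ 2 ∂μ)
    (hT2 : Integrable (fun ω => (T ω - 1) ^ 2) μ)
    (ζ : ℕ → ℝ → ℝ)
    (hζ : ∀ (n : ℕ) (θ : ℝ), 1 ≤ n →
      Real.exp (-θ) * ∫ ω, Real.exp (-(ζ n θ) * min (T ω) (Real.sqrt n)) ∂μ = 1)
    (θ : ℝ) :
    Tendsto
      (fun n : ℕ =>
        (n : ℝ) *
          (ζ n (θ / Real.sqrt n) - (-(θ / Real.sqrt n)) - σS ^ 2 * θ ^ 2 / (2 * n)))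
      atTop (nhds 0) := by
  have hTL2 : MemLp T 2 μ := by
    convert ((memLp_two_iff_integrable_sq (by fun_prop)).2 hT2).add (memLp_const 1) using 1
    ext ω; simp
  have hvar : variance T μ = σS ^ 2 := by
    rw [variance_eq_integral hTmeas.aemeasurable, hTmean, hσS]
  have heq : ∀ᶠ n : ℕ in atTop, ∫ ω, exp (-ζ n (θ / √n) * min (T ω) √n) ∂μ = exp (θ / √n) := by
    filter_upwards [eventually_ge_atTop 1] with n hn
    have h := hζ n (θ / √n) hn
    rw [exp_neg, inv_mul_eq_one₀ (exp_ne_zero _)] at h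
    exact h.symm
  have hlim := tendsto_sq_mul_add_of_integral_exp_neg_mul_min_eq hTmeas (fun ω => (hTpos ω).le)
    hTL2 hTmean (fun n => sqrt_nonneg _) (tendsto_sqrt_atTop.comp tendsto_natCast_atTop_atTop) heq
  rw [hvar] at hlim
  have hlim' : Tendsto (fun n : ℕ => n * ζ n (θ / √n) + √n * θ - σS ^ 2 * θ ^ 2 / 2)
      atTop (𝓝 0) := by
    have h := hlim.sub_const (σS ^ 2 * θ ^ 2 / 2)
    rw [sub_self] at h
    simpa using h
  refine hlim'.congr' ?_
  filter_upwards [eventually_ge_atTop 1] with n hn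
  have hpos : (0 : ℝ) < √n := sqrt_pos.2 (by exact_mod_cast hn)
  have hsq : (√n : ℝ) ^ 2 = n := sq_sqrt (Nat.cast_nonneg n)
  set r : ℝ := √n
  rw [← hsq]
  field_simp
  ring
end

section
/- Let K ≥ 2 and suppose real sequences (B_1⁽ⁿ⁾,…,B_K⁽ⁿ⁾) and (d_1⁽ⁿ⁾,…,d_K⁽ⁿ⁾) satisfy: B_j⁽ⁿ⁾ = ∑_{i=j}^K b_i d_i⁽ⁿ⁾, d_i⁽ⁿ⁾ ≥ 0, ∑_i d_i⁽ⁿ⁾ = 1, and ξ_i B_i⁽ⁿ⁾ = ξ_{i−1} B_{i+1}⁽ⁿ⁾ + o(1) for i = 1,…,K−1, where ξ_0 = 1, ξ_j = ∏_{i≤j} e^{β_i(ℓ_i−ℓ_{i−1})}, β_i = 2b_i/σ_i², σ_i > 0, b_K < 0, 0 = ℓ_0 < ℓ_1 < … < ℓ_{K−1}. Then d_i⁽ⁿ⁾ → d_i := c_i/∑_{j=1}^{K} c_j as n → ∞ for every i, where c_i are defined by c_i = 2σ_i^{−2}(ℓ_{i−1}−ℓ_i)ξ_{i−1} if b_i =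 0, c_i = b_i^{−1}(1−e^{β_i(ℓ_i−ℓ_{i−1})})ξ_{i−1} if b_i ≠ 0 (i ≤ K−1), c_K = b_K^{−1}ξ_{K−1}. -/
/-!
Put `v_j := B_{j+1} / ξ_j`. Dividing the balance relation at level `i` by `ξ_i ξ_{i-1}` says
`v_i - v_{i-1} → 0`, so telescoping gives `v_i - v_{K-1} → 0` for every `i`. Together with
`d_i ≈ c_i v_i` (exact at the top level, where `B_K = b_K d_K`) this gives `d_i ≈ c_i v_{K-1}` for
all `i`, and summing over `i` shows `(∑ c_j) v_{K-1} → 1`. This forces `∑ c_j ≠ 0`, so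
`v_{K-1} → (∑ c_j)⁻¹` and every `d_i` converges.
-/

open Filter Finset Topology

theorem tendsto_div_sub_div_of_tendsto_mul_sub_mul {α : Type*} {l : Filter α} {x y : α → ℝ}
    {p q : ℝ} (hp : p ≠ 0) (hq : q ≠ 0) (h : Tendsto (fun a => p * x a - q * y a) l (𝓝 0)) :
    Tendsto (fun a => y a / p - x a / q) l (𝓝 0) := by
  have := h.const_mul (-(p * q)⁻¹)
  rw [mul_zero] at this
  refine this.congr fun a => ?_
  field_simp
  ring

theorem tendsto_sub_of_tendsto_succ_sub {α G : Type*} [AddCommGroup G] [TopologicalSpace G]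
    [IsTopologicalAddGroup G] {l : Filter α} (u : ℕ → α → G) {m : ℕ}
    (h : ∀ k < m, Tendsto (fun a => u (k + 1) a - u k a) l (𝓝 0)) :
    ∀ i ≤ m, Tendsto (fun a => u m a - u i a) l (𝓝 0) := by
  intro i hi
  have := tendsto_finsetSum (Ico i m) fun k hk => h k (mem_Ico.1 hk).2
  rw [sum_const_zero] at this
  exact this.congr fun a => sum_Ico_sub (fun k => u k a) hi

theorem tendsto_div_sum_of_tendsto_sub_mul {α ι : Type*} {l : Filter α} [l.NeBot]
    (s : Finset ι) (c : ι → ℝ) (d : α → ι → ℝ) (u : α → ℝ) (hsum : ∀ a, ∑ i ∈ s, d a i = 1)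
    (h : ∀ i ∈ s, Tendsto (fun a => d a i - c i * u a) l (𝓝 0)) :
    ∀ i ∈ s, Tendsto (fun a => d a i) l (𝓝 (c i / ∑ j ∈ s, c j)) := by
  set S := ∑ j ∈ s, c j
  have hSu : Tendsto (fun a => S * u a) l (𝓝 1) := by
    have := tendsto_finsetSum s h
    simp only [sum_sub_distrib, hsum, ← sum_mul, sum_const_zero] at this
    simpa using (tendsto_const_nhds (x := (1 : ℝ))).sub this
  have hS : S ≠ 0 := by
    rintro hS
    simp only [hS, zero_mul] at hSu
    exact zero_ne_one (tendsto_nhds_unique tendsto_const_nhds hSu)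
  have hu : Tendsto u l (𝓝 S⁻¹) := by
    simpa [hS] using hSu.const_mul S⁻¹
  intro i hi
  simpa [div_eq_mul_inv] using (h i hi).add (hu.const_mul (c i))

theorem stmt19_general (K : ℕ) (b ℓ : ℕ → ℝ)
    (hbK : b K < 0)
    (β : ℕ → ℝ)
    (ξ : ℕ → ℝ) (hξ0 : ξ 0 = 1)
    (hξ : ∀ j, 1 ≤ j → j ≤ K - 1 →
      ξ j = ∏ i ∈ Finset.Icc 1 j, Real.exp (β i * (ℓ i - ℓ (i - 1))))
    (c : ℕ → ℝ)
    (hcK : c K = ξ (K - 1) / b K)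
    (B d : ℕ → ℕ → ℝ)
    (hB : ∀ n : ℕ, ∀ i, 1 ≤ i → i ≤ K →
      B n i = ∑ j ∈ Finset.Icc i K, b j * d n j)
    (hdsum : ∀ n : ℕ, ∑ i ∈ Finset.Icc 1 K, d n i = 1)
    (hrec : ∀ i, 1 ≤ i → i ≤ K - 1 →
      Tendsto (fun n : ℕ => ξ i * B n i - ξ (i - 1) * B n (i + 1)) atTop (nhds 0))
    (hdet : ∀ i, 1 ≤ i → i ≤ K - 1 →
      Tendsto (fun n : ℕ => d n i - c i * (ξ i)⁻¹ * B n (i + 1)) atTop (nhds 0)) :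
    ∀ i, 1 ≤ i → i ≤ K →
      Tendsto (fun n : ℕ => d n i) atTop
        (nhds (c i / ∑ j ∈ Finset.Icc 1 K, c j)) := by
  have hξ_ne : ∀ j ≤ K - 1, ξ j ≠ 0 := by
    intro j hj
    rcases Nat.eq_zero_or_pos j with rfl | hj0
    · simp [hξ0]
    · rw [hξ j hj0 hj]
      exact prod_ne_zero_iff.2 fun i _ => (Real.exp_pos _).ne'
  set v : ℕ → ℕ → ℝ := fun j n => B n (j + 1) / ξ j
  have hv : ∀ i ≤ K - 1, Tendsto (fun n => v (K - 1) n - v i n) atTop (𝓝 0) := by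
    refine tendsto_sub_of_tendsto_succ_sub v fun k hk => ?_
    have := hrec (k + 1) (by omega) (by omega)
    simp only [Nat.add_sub_cancel] at this
    exact tendsto_div_sub_div_of_tendsto_mul_sub_mul (hξ_ne _ (by omega)) (hξ_ne _ (by omega)) this
  refine fun i hi hiK => tendsto_div_sum_of_tendsto_sub_mul (Icc 1 K) c d (v (K - 1)) hdsum
    (fun i hi => ?_) i (mem_Icc.2 ⟨hi, hiK⟩)
  obtain ⟨hi1, hiK⟩ := mem_Icc.1 hi
  rcases hiK.lt_or_eq with hiK | rfl
  · have := (hdet i hi1 (by omega)).sub ((hv i (by omega)).const_mul (c i))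
    rw [mul_zero, sub_zero] at this
    refine this.congr fun n => ?_
    simp only [v]
    ring
  · have hBK : ∀ n, B n i = b i * d n i := fun n => by
      rw [hB n i (by omega) le_rfl, Icc_self, sum_singleton]
    have hzero : ∀ n, d n i - c i * v (i - 1) n = 0 := fun n => by
      simp only [v, Nat.sub_add_cancel hi1, hBK, hcK]
      field_simp [hξ_ne _ le_rfl, hbK.ne]
      ring
    simp only [hzero, tendsto_const_nhds]

theorem stmt19 (K : ℕ) (hK : 2 ≤ K) (b σ ℓ : ℕ → ℝ)
    (hbK : b K < 0)
    (hσ : ∀ i, 1 ≤ i → i ≤ K → 0 < σ i)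
    (hℓ0 : ℓ 0 = 0)
    (hℓ : ∀ i, 1 ≤ i → i ≤ K - 1 → ℓ (i - 1) < ℓ i)
    (β : ℕ → ℝ) (hβ : ∀ i, β i = 2 * b i / (σ i) ^ 2)
    (ξ : ℕ → ℝ) (hξ0 : ξ 0 = 1)
    (hξ : ∀ j, 1 ≤ j → j ≤ K - 1 →
      ξ j = ∏ i ∈ Finset.Icc 1 j, Real.exp (β i * (ℓ i - ℓ (i - 1))))
    (c : ℕ → ℝ)
    (hc : ∀ i, 1 ≤ i → i ≤ K - 1 →
      c i = if b i = 0 then 2 / (σ i) ^ 2 * (ℓ (i - 1) - ℓ i) * ξ (i - 1)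
            else (1 - Real.exp (β i * (ℓ i - ℓ (i - 1)))) / b i * ξ (i - 1))
    (hcK : c K = ξ (K - 1) / b K)
    (B d : ℕ → ℕ → ℝ)
    (hB : ∀ n : ℕ, ∀ i, 1 ≤ i → i ≤ K →
      B n i = ∑ j ∈ Finset.Icc i K, b j * d n j)
    (hdnn : ∀ n : ℕ, ∀ i, 1 ≤ i → i ≤ K → 0 ≤ d n i)
    (hdsum : ∀ n : ℕ, ∑ i ∈ Finset.Icc 1 K, d n i = 1)
    (hrec : ∀ i, 1 ≤ i → i ≤ K - 1 →
      Tendsto (fun n : ℕ => ξ i * B n i - ξ (i - 1) * B n (i + 1)) atTop (nhds 0))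
    (hdet : ∀ i, 1 ≤ i → i ≤ K - 1 →
      Tendsto (fun n : ℕ => d n i - c i * (ξ i)⁻¹ * B n (i + 1)) atTop (nhds 0)) :
    ∀ i, 1 ≤ i → i ≤ K →
      Tendsto (fun n : ℕ => d n i) atTop
        (nhds (c i / ∑ j ∈ Finset.Icc 1 K, c j)) :=
  stmt19_general K b ℓ hbK β ξ hξ0 hξ c hcK B d hB hdsum hrec hdet
end
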